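/- arXiv:2301.12466 — 2 statements merged into one kernel-verified Lean document; each statement's English description precedes it below -/
import Mathlib

section
/- Let H₁ and H₂ be real Hilbert spaces, X a random variable in H₁ and Y a random variable in H₂ with E‖X‖ < ∞, E‖Y‖ < ∞, and X independent of Y. Then the Bochner expectation of the tensor product factorizes: E[X ⊗ Y] = E[X] ⊗ E[Y] in the Hilbert tensor product H₁ ⊗ H₂. -/
open MeasureTheory ProbabilityTheory
open scoped RealInnerProductSpace

/-- An abstract model of the Hilbert-space tensor product `H₁ ⊗ H₂`: a Hilbert space `T`
together with a bilinear map `tmul` satisfying `⟪a⊗b, c⊗d⟫ = ⟪a,c⟫⟪b,d⟫`, whose simple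
tensors span a dense subspace. -/
structure HilbertTensorProduct (H₁ H₂ T : Type*)
    [NormedAddCommGroup H₁] [InnerProductSpace ℝ H₁]
    [NormedAddCommGroup H₂] [InnerProductSpace ℝ H₂]
    [NormedAddCommGroup T] [InnerProductSpace ℝ T] where
  tmul : H₁ → H₂ → T
  add_left : ∀ a a' b, tmul (a + a') b = tmul a b + tmul a' b
  add_right : ∀ a b b', tmul a (b + b') = tmul a b + tmul a b'
  smul_left : ∀ (c : ℝ) a b, tmul (c • a) b = c • tmul a b
  smul_right : ∀ (c : ℝ) a b, tmul a (c • b) = c • tmul a b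
  inner_tmul : ∀ a b c d, ⟪tmul a b, tmul c d⟫ = ⟪a, c⟫ * ⟪b, d⟫
  dense_span : Dense (↑(Submodule.span ℝ {x : T | ∃ a b, x = tmul a b}) : Set T)

/-- For independent Bochner-integrable Hilbert-space valued random variables `X, Y`,
the expectation of the tensor product factorizes: `E[X ⊗ Y] = E[X] ⊗ E[Y]`. -/
theorem integral_tmul_of_indepFun
    {Ω H₁ H₂ T : Type*} [MeasurableSpace Ω]
    [NormedAddCommGroup H₁] [InnerProductSpace ℝ H₁] [CompleteSpace H₁]
    [MeasurableSpace H₁] [BorelSpace H₁]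
    [NormedAddCommGroup H₂] [InnerProductSpace ℝ H₂] [CompleteSpace H₂]
    [MeasurableSpace H₂] [BorelSpace H₂]
    [NormedAddCommGroup T] [InnerProductSpace ℝ T] [CompleteSpace T]
    (P : HilbertTensorProduct H₁ H₂ T)
    (μ : Measure Ω) [IsProbabilityMeasure μ]
    (X : Ω → H₁) (Y : Ω → H₂) (hX : Measurable X) (hY : Measurable Y)
    (hXi : Integrable X μ) (hYi : Integrable Y μ)
    (hXYi : Integrable (fun ω => P.tmul (X ω) (Y ω)) μ)
    (hindep : IndepFun X Y μ) :
    ∫ ω, P.tmul (X ω) (Y ω) ∂μ = P.tmul (∫ ω, X ω ∂μ) (∫ ω, Y ω ∂μ) := by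
  set u := ∫ ω, P.tmul (X ω) (Y ω) ∂μ with hu
  set v := P.tmul (∫ ω, X ω ∂μ) (∫ ω, Y ω ∂μ) with hv
  -- key: inner products with simple tensors agree
  have key : ∀ a b, ⟪P.tmul a b, u⟫ = ⟪P.tmul a b, v⟫ := by
    intro a b
    have hXa : Integrable (fun ω => ⟪a, X ω⟫) μ := by
      exact (innerSL ℝ a).integrable_comp hXi
    have hYb : Integrable (fun ω => ⟪b, Y ω⟫) μ := by
      exact (innerSL ℝ b).integrable_comp hYi
    have hind : IndepFun (fun ω => ⟪a, X ω⟫) (fun ω => ⟪b, Y ω⟫) μ :=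
      hindep.comp ((innerSL ℝ a).continuous.measurable) ((innerSL ℝ b).continuous.measurable)
    have h1 : ⟪P.tmul a b, u⟫ = ∫ ω, ⟪P.tmul a b, P.tmul (X ω) (Y ω)⟫ ∂μ :=
      (integral_inner hXYi _).symm
    rw [h1]
    have h2 : ∀ ω, ⟪P.tmul a b, P.tmul (X ω) (Y ω)⟫ = ⟪a, X ω⟫ * ⟪b, Y ω⟫ := fun ω =>
      P.inner_tmul a b (X ω) (Y ω)
    simp only [h2]
    have hmul := hind.integral_mul_eq_mul_integral hXa.aestronglyMeasurable hYb.aestronglyMeasurable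
    rw [hv, P.inner_tmul, ← integral_inner hXi, ← integral_inner hYi]
    exact hmul
  -- extend to the span by linearity, then to everything by density
  have hspan : ∀ z ∈ Submodule.span ℝ {x : T | ∃ a b, x = P.tmul a b}, ⟪z, u - v⟫ = 0 := by
    intro z hz
    induction hz using Submodule.span_induction with
    | mem x hx =>
      obtain ⟨a, b, rfl⟩ := hx
      rw [inner_sub_right, key, sub_self]
    | zero => simp
    | add x y _ _ hx hy => rw [inner_add_left, hx, hy, add_zero]
    | smul c x _ hx => rw [inner_smul_left, hx, mul_zero]
  have hclosed : IsClosed {z : T | ⟪z, u - v⟫ = 0} :=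
    isClosed_eq (continuous_id.inner continuous_const) continuous_const
  have hall : ∀ z : T, ⟪z, u - v⟫ = 0 := by
    intro z
    have := P.dense_span.closure_eq
    have hz : z ∈ closure (↑(Submodule.span ℝ {x : T | ∃ a b, x = P.tmul a b}) : Set T) := by
      rw [this]; trivial
    exact hclosed.closure_subset_iff.mpr (fun w hw => hspan w hw) hz
  have : u - v = 0 := by
    have := hall (u - v)
    rwa [inner_self_eq_zero] at this
  exact sub_eq_zero.mp this
end

section
/- Let H be a real Hilbert space and X, Y be H-valued Bochner-integrable random variables with E‖X‖² < ∞, E‖Y‖² < ∞, where X ∼ γ and Y ∼ η are independent. Define the (degree-2) RKHS variance embedding κ²(γ) = E[X⊗X] − E[X]⊗E[X] ∈ H ⊗ H, and similarly κ²(η). Then ‖κ²(γ) − κ²(η)‖²_{H⊗H} = E⟨X,X'⟩⟨X'',X'''⟩ + E⟨Y,Y'⟩⟨Y'',Y'''⟩ + E⟨X,X'⟩² + E⟨Y,Y'⟩² + 2E⟨X,Y⟩⟨X',Y⟩ + 2E⟨X,Y⟩⟨X,Y'⟩ − 2E⟨X,Y⟩⟨X',Y'⟩ − 2E⟨X,Y⟩²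 − 2E⟨X,X'⟩⟨X,X''⟩ − 2E⟨Y,Y'⟩⟨Y,Y''⟩, where X,X',X'',X''' are independent copies with law γ and Y,Y',Y'',Y''' independent copies with law η. -/
open MeasureTheory ProbabilityTheory
open scoped RealInnerProductSpace

/-!
Since `⟪a, c⟫ * ⟪b, d⟫ = ⟪a ⊗ b, c ⊗ d⟫`, every integrand on the right is an inner product of
simple tensors. Integrating out the variables from the innermost one outwards, each integral
passes through the inner product and the continuous bilinear map `⊗`, so every term becomes an
inner product among `E[X⊗X]`, `E[X]⊗E[X]`, `E[Y⊗Y]`, `E[Y]⊗E[Y]`; the identity is then the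
expansion of the squared norm of `(E[X⊗X] - E[X]⊗E[X]) - (E[Y⊗Y] - E[Y]⊗E[Y])`.
-/
theorem integral_inner_const {α E : Type*} [MeasurableSpace α] {μ : Measure α}
    [NormedAddCommGroup E] [InnerProductSpace ℝ E] [CompleteSpace E]
    {f : α → E} (hf : Integrable f μ) (c : E) :
    ∫ x, ⟪f x, c⟫ ∂μ = ⟪∫ x, f x ∂μ, c⟫ := by
  simpa only [real_inner_comm c] using integral_inner hf c

namespace HilbertTensorProduct

variable {H₁ H₂ T : Type*}
  [NormedAddCommGroup H₁] [InnerProductSpace ℝ H₁]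
  [NormedAddCommGroup H₂] [InnerProductSpace ℝ H₂]
  [NormedAddCommGroup T] [InnerProductSpace ℝ T]
  (P : HilbertTensorProduct H₁ H₂ T)

theorem norm_tmul (a : H₁) (b : H₂) : ‖P.tmul a b‖ = ‖a‖ * ‖b‖ := by
  have h : ‖P.tmul a b‖ ^ 2 = (‖a‖ * ‖b‖) ^ 2 := by
    rw [← real_inner_self_eq_norm_sq, P.inner_tmul, real_inner_self_eq_norm_sq,
      real_inner_self_eq_norm_sq, mul_pow]
  exact (sq_eq_sq₀ (norm_nonneg _) (by positivity)).mp h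

noncomputable def toCLM : H₁ →L[ℝ] H₂ →L[ℝ] T :=
  LinearMap.mkContinuous₂
    (LinearMap.mk₂ ℝ P.tmul P.add_left P.smul_left P.add_right P.smul_right) 1
    fun a b => by simp [P.norm_tmul]

variable {α : Type*} [MeasurableSpace α] {μ : Measure α}

theorem integrable_const_tmul {f : α → H₂} (hf : Integrable f μ) (a : H₁) :
    Integrable (fun x => P.tmul a (f x)) μ :=
  (P.toCLM a).integrable_comp hf

theorem integrable_tmul_const {f : α → H₁} (hf : Integrable f μ) (b : H₂) :
    Integrable (fun x => P.tmul (f x) b) μ :=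
  (P.toCLM.flip b).integrable_comp hf

theorem integral_const_tmul [CompleteSpace H₂] [CompleteSpace T] {f : α → H₂}
    (hf : Integrable f μ) (a : H₁) :
    ∫ x, P.tmul a (f x) ∂μ = P.tmul a (∫ x, f x ∂μ) :=
  (P.toCLM a).integral_comp_comm hf

theorem integral_tmul_const [CompleteSpace H₁] [CompleteSpace T] {f : α → H₁}
    (hf : Integrable f μ) (b : H₂) :
    ∫ x, P.tmul (f x) b ∂μ = P.tmul (∫ x, f x ∂μ) b :=
  (P.toCLM.flip b).integral_comp_comm hf

end HilbertTensorProduct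

theorem norm_sq_variance_embedding_diff_general
    {H T : Type*}
    [NormedAddCommGroup H] [InnerProductSpace ℝ H] [CompleteSpace H]
    [NormedAddCommGroup T] [InnerProductSpace ℝ T] [CompleteSpace T]
    [MeasurableSpace H]
    (P : HilbertTensorProduct H H T)
    (γ η : Measure H) [IsProbabilityMeasure γ] [IsProbabilityMeasure η]
    (hγi : Integrable (fun x => P.tmul x x) γ) (hηi : Integrable (fun y => P.tmul y y) η)
    (hγ2 : MeasureTheory.MemLp (fun x : H => x) 2 γ)
    (hη2 : MeasureTheory.MemLp (fun y : H => y) 2 η) :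
    ‖((∫ x, P.tmul x x ∂γ) - P.tmul (∫ x, x ∂γ) (∫ x, x ∂γ))
        - ((∫ y, P.tmul y y ∂η) - P.tmul (∫ y, y ∂η) (∫ y, y ∂η))‖ ^ 2
      = (∫ x, ∫ x', ∫ x'', ∫ x''', ⟪x, x'⟫ * ⟪x'', x'''⟫ ∂γ ∂γ ∂γ ∂γ)
        + (∫ y, ∫ y', ∫ y'', ∫ y''', ⟪y, y'⟫ * ⟪y'', y'''⟫ ∂η ∂η ∂η ∂η)
        + (∫ x, ∫ x', ⟪x, x'⟫ ^ 2 ∂γ ∂γ)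
        + (∫ y, ∫ y', ⟪y, y'⟫ ^ 2 ∂η ∂η)
        + 2 * (∫ x, ∫ x', ∫ y, ⟪x, y⟫ * ⟪x', y⟫ ∂η ∂γ ∂γ)
        + 2 * (∫ x, ∫ y, ∫ y', ⟪x, y⟫ * ⟪x, y'⟫ ∂η ∂η ∂γ)
        - 2 * (∫ x, ∫ x', ∫ y, ∫ y', ⟪x, y⟫ * ⟪x', y'⟫ ∂η ∂η ∂γ ∂γ)
        - 2 * (∫ x, ∫ y, ⟪x, y⟫ ^ 2 ∂η ∂γ)
        - 2 * (∫ x, ∫ x', ∫ x'', ⟪x, x'⟫ * ⟪x, x''⟫ ∂γ ∂γ ∂γ)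
        - 2 * (∫ y, ∫ y', ∫ y'', ⟪y, y'⟫ * ⟪y, y''⟫ ∂η ∂η ∂η) := by
  have hγ1 : Integrable (fun x : H => x) γ := hγ2.integrable one_le_two
  have hη1 : Integrable (fun y : H => y) η := hη2.integrable one_le_two
  rw [← real_inner_self_eq_norm_sq]
  simp only [sq, ← P.inner_tmul]
  simp only [integral_inner, integral_inner_const, hγi, hηi,
    P.integrable_const_tmul hγ1, P.integrable_tmul_const hγ1,
    P.integrable_const_tmul hη1, P.integrable_tmul_const hη1,
    P.integral_const_tmul hγ1, P.integral_tmul_const hγ1,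
    P.integral_const_tmul hη1, P.integral_tmul_const hη1]
  simp only [inner_sub_left, inner_sub_right, real_inner_comm]
  ring

/-- The squared distance between the degree-2 variance embeddings
`κ²(γ) = E[X⊗X] − E[X]⊗E[X]` and `κ²(η)` expands by the expected kernel trick into
expectations of products of inner products of independent copies (iterated integrals). -/
theorem norm_sq_variance_embedding_diff
    {H T : Type*}
    [NormedAddCommGroup H] [InnerProductSpace ℝ H] [CompleteSpace H]
    [NormedAddCommGroup T] [InnerProductSpace ℝ T] [CompleteSpace T]
    [MeasurableSpace H] [BorelSpace H]
    (P : HilbertTensorProduct H H T)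
    (γ η : Measure H) [IsProbabilityMeasure γ] [IsProbabilityMeasure η]
    (hγi : Integrable (fun x => P.tmul x x) γ) (hηi : Integrable (fun y => P.tmul y y) η)
    (hγ2 : MeasureTheory.MemLp (fun x : H => x) 2 γ)
    (hη2 : MeasureTheory.MemLp (fun y : H => y) 2 η) :
    ‖((∫ x, P.tmul x x ∂γ) - P.tmul (∫ x, x ∂γ) (∫ x, x ∂γ))
        - ((∫ y, P.tmul y y ∂η) - P.tmul (∫ y, y ∂η) (∫ y, y ∂η))‖ ^ 2
      = (∫ x, ∫ x', ∫ x'', ∫ x''', ⟪x, x'⟫ * ⟪x'', x'''⟫ ∂γ ∂γ ∂γ ∂γ)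
        + (∫ y, ∫ y', ∫ y'', ∫ y''', ⟪y, y'⟫ * ⟪y'', y'''⟫ ∂η ∂η ∂η ∂η)
        + (∫ x, ∫ x', ⟪x, x'⟫ ^ 2 ∂γ ∂γ)
        + (∫ y, ∫ y', ⟪y, y'⟫ ^ 2 ∂η ∂η)
        + 2 * (∫ x, ∫ x', ∫ y, ⟪x, y⟫ * ⟪x', y⟫ ∂η ∂γ ∂γ)
        + 2 * (∫ x, ∫ y, ∫ y', ⟪x, y⟫ * ⟪x, y'⟫ ∂η ∂η ∂γ)
        - 2 * (∫ x, ∫ x', ∫ y, ∫ y', ⟪x, y⟫ * ⟪x', y'⟫ ∂η ∂η ∂γ ∂γ)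
        - 2 * (∫ x, ∫ y, ⟪x, y⟫ ^ 2 ∂η ∂γ)
        - 2 * (∫ x, ∫ x', ∫ x'', ⟪x, x'⟫ * ⟪x, x''⟫ ∂γ ∂γ ∂γ)
        - 2 * (∫ y, ∫ y', ∫ y'', ⟪y, y'⟫ * ⟪y, y''⟫ ∂η ∂η ∂η) :=
  norm_sq_variance_embedding_diff_general P γ η hγi hηi hγ2 hη2
end
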